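/- Let d ≥ 1 and let (ν_ε)_{ε>0} be a family of finite nonzero positive Borel measures on ℝ^d with ν_ε({0}) = 0. Assume that for every R > 0, ν_ε({x : |x| > R}) / ν_ε(ℝ^d) → 1 as ε → 0⁺. Then for every Borel set E ⊂ ℝ^d of finite Lebesgue measure, lim_{ε→0⁺} (ν_ε(ℝ^d))^{−1} Per_{ν_ε}(E) = |E|. -/

import Mathlib

/-!
Since `ν(Eᶜ - x) = ν(ℝ^d) - ν(E - x)`, the normalized perimeter equals `|E|` minus the normalized
overlap `ν(ℝ^d)⁻¹ ∫_E ν(E - x) dx`, and it suffices to show that the overlap vanishes in the limit.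
Fix `M`. A point `x ∈ E` with `|x| ≤ M` reaches `E` either by a jump of length at most `2M`, whose
normalized `ν_ε`-mass tends to `0`, or by landing in `E \ B_M`; by Tonelli and translation
invariance of Lebesgue measure these landings, together with the points of `E \ B_M` themselves,
contribute at most `2 |E \ B_M|`, which is small once `M` is large.
-/

open MeasureTheory Filter Topology ENNReal

/-- The non-local `ν`-perimeter: `Per_ν(E) = ∫_E ν(Eᶜ − x) dx`. -/
noncomputable def nuPer {d : ℕ} (ν : Measure (EuclideanSpace ℝ (Fin d)))
    (E : Set (EuclideanSpace ℝ (Fin d))) : ℝ≥0∞ :=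
  ∫⁻ x in E, ν {y | x + y ∈ Eᶜ}

open Metric Set

theorem tendsto_nhds_zero_of_eventually_le_add {α ι : Type*} {l : Filter α} {L : Filter ι}
    [L.NeBot] {f : α → ℝ≥0∞} {g : ι → ℝ≥0∞} {h : ι → α → ℝ≥0∞}
    (hg : Tendsto g L (𝓝 0)) (hh : ∀ᶠ i in L, Tendsto (h i) l (𝓝 0))
    (hle : ∀ᶠ i in L, ∀ᶠ a in l, f a ≤ g i + h i a) : Tendsto f l (𝓝 0) := by
  rw [ENNReal.tendsto_nhds_zero]
  intro δ hδ
  have hδ2 : 0 < δ / 2 := ENNReal.half_pos hδ.ne'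
  obtain ⟨i, hgi, hhi, hlei⟩ :=
    ((ENNReal.tendsto_nhds_zero.1 hg _ hδ2).and (hh.and hle)).exists
  filter_upwards [hlei, ENNReal.tendsto_nhds_zero.1 hhi _ hδ2] with a hfa hha
  calc f a ≤ g i + h i a := hfa
    _ ≤ δ / 2 + δ / 2 := add_le_add hgi hha
    _ = δ := ENNReal.add_halves δ

theorem tendsto_measure_compl_div_univ {Ω ι : Type*} [MeasurableSpace Ω] {l : Filter ι}
    {ν : ι → Measure Ω} {s : Set Ω} (hs : MeasurableSet s)
    (hfin : ∀ᶠ i in l, ν i univ ≠ ⊤) (hpos : ∀ᶠ i in l, ν i univ ≠ 0)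
    (h : Tendsto (fun i => ν i s / ν i univ) l (𝓝 1)) :
    Tendsto (fun i => ν i sᶜ / ν i univ) l (𝓝 0) := by
  have hsub := ENNReal.Tendsto.sub tendsto_const_nhds h (Or.inl one_ne_top)
  rw [tsub_self] at hsub
  refine hsub.congr' ?_
  filter_upwards [hfin, hpos] with i hfi hpi
  have : IsFiniteMeasure (ν i) := ⟨hfi.lt_top⟩
  rw [measure_compl hs (measure_ne_top _ _), ENNReal.sub_div fun _ _ => hpi,
    ENNReal.div_self hpi hfi]

theorem tendsto_measure_diff_closedBall_atTop {X : Type*} [PseudoMetricSpace X]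
    [MeasurableSpace X] [OpensMeasurableSpace X] (μ : Measure X) {E : Set X}
    (hE : MeasurableSet E) (hEvol : μ E ≠ ⊤) (x : X) :
    Tendsto (fun r : ℝ => μ (E \ closedBall x r)) atTop (𝓝 0) := by
  have hempty : (⋂ r : ℝ, E \ closedBall x r) = ∅ :=
    eq_empty_of_forall_notMem fun y hy =>
      (mem_iInter.1 hy (dist y x)).2 (mem_closedBall.2 le_rfl)
  have h := tendsto_measure_iInter_atTop (μ := μ) (s := fun r : ℝ => E \ closedBall x r)
    (fun _ => (hE.diff measurableSet_closedBall).nullMeasurableSet)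
    (fun _ _ hrs => sdiff_subset_sdiff_right (closedBall_subset_closedBall hrs))
    ⟨0, (measure_mono sdiff_subset).trans_lt hEvol.lt_top |>.ne⟩
  rwa [hempty, measure_empty] at h

theorem setOf_add_mem_subset {G : Type*} [NormedAddCommGroup G] {E : Set G} {M : ℝ} {x : G}
    (hx : ‖x‖ ≤ M) :
    {y | x + y ∈ E} ⊆ closedBall 0 (2 * M) ∪ {y | x + y ∈ E \ closedBall 0 M} := by
  intro y hy
  by_cases hxy : x + y ∈ closedBall 0 M
  · left
    rw [mem_closedBall_zero_iff] at hxy ⊢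
    calc ‖y‖ = ‖(x + y) - x‖ := by rw [add_sub_cancel_left]
      _ ≤ ‖x + y‖ + ‖x‖ := norm_sub_le _ _
      _ ≤ 2 * M := by linarith
  · exact Or.inr ⟨hy, hxy⟩

section Overlap

variable {G : Type*} [MeasurableSpace G]

noncomputable def overlap [Add G] (μ ν : Measure G) (E : Set G) : ℝ≥0∞ :=
  ∫⁻ x in E, ν {y | x + y ∈ E} ∂μ

section AddGroup

variable [AddGroup G] [MeasurableAdd₂ G]

theorem measurable_measure_add_mem (ν : Measure G) [SFinite ν] {A : Set G}
    (hA : MeasurableSet A) : Measurable fun x => ν {y | x + y ∈ A} :=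
  measurable_measure_prodMk_left (measurable_add hA)

theorem lintegral_measure_add_mem (μ ν : Measure G) [SFinite μ] [SFinite ν]
    [μ.IsAddRightInvariant] {A : Set G} (hA : MeasurableSet A) :
    ∫⁻ x, ν {y | x + y ∈ A} ∂μ = μ A * ν univ := by
  have hS : MeasurableSet {p : G × G | p.1 + p.2 ∈ A} := measurable_add hA
  calc ∫⁻ x, ν {y | x + y ∈ A} ∂μ = μ.prod ν {p | p.1 + p.2 ∈ A} :=
        (Measure.prod_apply hS).symm
    _ = ∫⁻ y, μ ((· + y) ⁻¹' A) ∂ν := Measure.prod_apply_symm hS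
    _ = μ A * ν univ := by simp_rw [measure_preimage_add_right, lintegral_const]

end AddGroup

variable [NormedAddCommGroup G] [MeasurableAdd₂ G] [OpensMeasurableSpace G]

theorem overlap_le (μ ν : Measure G) [SFinite μ] [SFinite ν] [μ.IsAddRightInvariant]
    {E : Set G} (hE : MeasurableSet E) (M : ℝ) :
    overlap μ ν E ≤ ν (closedBall 0 (2 * M)) * μ E + 2 * (ν univ * μ (E \ closedBall 0 M)) := by
  set A := E \ closedBall 0 M
  have hA : MeasurableSet A := hE.diff measurableSet_closedBall
  have hnear : ∫⁻ x in E ∩ closedBall 0 M, ν {y | x + y ∈ E} ∂μ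
      ≤ ν (closedBall 0 (2 * M)) * μ E + ν univ * μ A :=
    calc ∫⁻ x in E ∩ closedBall 0 M, ν {y | x + y ∈ E} ∂μ
        ≤ ∫⁻ x in E ∩ closedBall 0 M, ν (closedBall 0 (2 * M)) + ν {y | x + y ∈ A} ∂μ :=
          setLIntegral_mono (measurable_const.add (measurable_measure_add_mem ν hA))
            fun _ hx => (measure_mono (setOf_add_mem_subset (mem_closedBall_zero_iff.1 hx.2))).trans
              (measure_union_le _ _)
      _ = ν (closedBall 0 (2 * M)) * μ (E ∩ closedBall 0 M)
            + ∫⁻ x in E ∩ closedBall 0 M, ν {y | x + y ∈ A} ∂μ := by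
          rw [lintegral_add_left measurable_const, setLIntegral_const]
      _ ≤ ν (closedBall 0 (2 * M)) * μ E + ∫⁻ x, ν {y | x + y ∈ A} ∂μ :=
          add_le_add (by gcongr; exact inter_subset_left) (setLIntegral_le_lintegral _ _)
      _ = ν (closedBall 0 (2 * M)) * μ E + ν univ * μ A := by
          rw [lintegral_measure_add_mem μ ν hA, mul_comm (μ A)]
  have hfar : ∫⁻ x in A, ν {y | x + y ∈ E} ∂μ ≤ ν univ * μ A :=
    calc ∫⁻ x in A, ν {y | x + y ∈ E} ∂μ ≤ ∫⁻ _ in A, ν univ ∂μ :=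
          lintegral_mono fun _ => measure_mono (subset_univ _)
      _ = ν univ * μ A := setLIntegral_const _ _
  calc overlap μ ν E
      = ∫⁻ x in E ∩ closedBall 0 M, ν {y | x + y ∈ E} ∂μ + ∫⁻ x in A, ν {y | x + y ∈ E} ∂μ :=
        (lintegral_inter_add_sdiff _ _ measurableSet_closedBall).symm
    _ ≤ ν (closedBall 0 (2 * M)) * μ E + ν univ * μ A + ν univ * μ A := add_le_add hnear hfar
    _ = ν (closedBall 0 (2 * M)) * μ E + 2 * (ν univ * μ A) := by ring

theorem tendsto_inv_mul_overlap {ι : Type*} {l : Filter ι} (μ : Measure G) [SFinite μ]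
    [μ.IsAddRightInvariant] (ν : ι → Measure G) (hfin : ∀ᶠ i in l, ν i univ ≠ ⊤)
    (hpos : ∀ᶠ i in l, ν i univ ≠ 0)
    (htail : ∀ R > (0 : ℝ), Tendsto (fun i => ν i {x | R < ‖x‖} / ν i univ) l (𝓝 1))
    {E : Set G} (hE : MeasurableSet E) (hEvol : μ E ≠ ⊤) :
    Tendsto (fun i => (ν i univ)⁻¹ * overlap μ (ν i) E) l (𝓝 0) := by
  have hball : ∀ R > (0 : ℝ), Tendsto (fun i => ν i (closedBall 0 R) / ν i univ) l (𝓝 0) := by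
    intro R hR
    have hcompl : ∀ i, ν i (closedBall 0 R) = ν i {x | R < ‖x‖}ᶜ := fun i => by
      congr 1; ext x; simp
    simp_rw [hcompl]
    exact tendsto_measure_compl_div_univ (measurableSet_lt measurable_const measurable_norm)
      hfin hpos (htail R hR)
  have hsmall : Tendsto (fun r : ℝ => 2 * μ (E \ closedBall 0 r)) atTop (𝓝 0) := by
    simpa using ENNReal.Tendsto.const_mul
      (tendsto_measure_diff_closedBall_atTop μ hE hEvol 0) (Or.inr ofNat_ne_top)
  refine tendsto_nhds_zero_of_eventually_le_add hsmall
    (h := fun r i => μ E * (ν i (closedBall 0 (2 * r)) / ν i univ)) ?_ ?_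
  · filter_upwards [eventually_gt_atTop 0] with r hr
    simpa using ENNReal.Tendsto.const_mul (hball (2 * r) (by positivity)) (Or.inr hEvol)
  · refine Eventually.of_forall fun r => ?_
    filter_upwards [hfin, hpos] with i hfi hpi
    have : IsFiniteMeasure (ν i) := ⟨hfi.lt_top⟩
    calc (ν i univ)⁻¹ * overlap μ (ν i) E
        ≤ (ν i univ)⁻¹ * (ν i (closedBall 0 (2 * r)) * μ E
            + 2 * (ν i univ * μ (E \ closedBall 0 r))) := by gcongr; exact overlap_le μ (ν i) hE r
      _ = 2 * μ (E \ closedBall 0 r) * ((ν i univ)⁻¹ * ν i univ)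
            + μ E * (ν i (closedBall 0 (2 * r)) / ν i univ) := by
          simp only [div_eq_mul_inv]; ring
      _ = 2 * μ (E \ closedBall 0 r) + μ E * (ν i (closedBall 0 (2 * r)) / ν i univ) := by
          rw [ENNReal.inv_mul_cancel hpi hfi, mul_one]

end Overlap

theorem inv_mul_nuPer_eq_sub {d : ℕ} (ν : Measure (EuclideanSpace ℝ (Fin d))) [IsFiniteMeasure ν]
    (hν : ν univ ≠ 0) {E : Set (EuclideanSpace ℝ (Fin d))} (hE : MeasurableSet E)
    (hEvol : volume E ≠ ⊤) :
    (ν univ)⁻¹ * nuPer ν E = volume E - (ν univ)⁻¹ * overlap volume ν E := by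
  have hle : ∀ x, ν {y | x + y ∈ E} ≤ ν univ := fun _ => measure_mono (subset_univ _)
  have hfin : overlap volume ν E ≠ ⊤ := by
    refine ((lintegral_mono hle).trans_lt ?_).ne
    rw [setLIntegral_const]
    exact mul_lt_top (measure_lt_top _ _) hEvol.lt_top
  have hper : nuPer ν E = ν univ * volume E - overlap volume ν E := by
    have hcompl : ∀ x, ν {y | x + y ∈ Eᶜ} = ν univ - ν {y | x + y ∈ E} := fun x =>
      measure_compl (hE.preimage (measurable_const_add x)) (measure_ne_top _ _)
    rw [nuPer, overlap]
    simp_rw [hcompl]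
    rw [lintegral_sub (measurable_measure_add_mem ν hE) hfin (ae_of_all _ hle),
      setLIntegral_const]
  rw [hper, ENNReal.mul_sub fun _ _ => inv_ne_top.2 hν, ← mul_assoc,
    ENNReal.inv_mul_cancel hν (measure_ne_top _ _), one_mul]

theorem statement11_general {d : ℕ}
    (ν : ℝ → Measure (EuclideanSpace ℝ (Fin d)))
    (hfin : ∀ ε > (0 : ℝ), ν ε Set.univ < ⊤)
    (hpos : ∀ ε > (0 : ℝ), ν ε Set.univ ≠ 0)
    (htail : ∀ R > (0 : ℝ),
      Tendsto (fun ε => ν ε {x | R < ‖x‖} / ν ε Set.univ) (𝓝[>] (0 : ℝ)) (𝓝 1))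
    (E : Set (EuclideanSpace ℝ (Fin d)))
    (hE : MeasurableSet E) (hEvol : volume E < ⊤) :
    Tendsto (fun ε => (ν ε Set.univ)⁻¹ * nuPer (ν ε) E) (𝓝[>] (0 : ℝ))
      (𝓝 (volume E)) := by
  have hfin' : ∀ᶠ ε in 𝓝[>] (0 : ℝ), ν ε univ ≠ ⊤ :=
    eventually_nhdsWithin_of_forall fun ε hε => (hfin ε hε).ne
  have hpos' : ∀ᶠ ε in 𝓝[>] (0 : ℝ), ν ε univ ≠ 0 := eventually_nhdsWithin_of_forall hpos
  have hlim := ENNReal.Tendsto.sub tendsto_const_nhds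
    (tendsto_inv_mul_overlap volume ν hfin' hpos' htail hE hEvol.ne) (Or.inl hEvol.ne)
  rw [tsub_zero] at hlim
  refine hlim.congr' ?_
  filter_upwards [hfin', hpos'] with ε hfε hpε
  have : IsFiniteMeasure (ν ε) := ⟨hfε.lt_top⟩
  exact (inv_mul_nuPer_eq_sub (ν ε) hpε hE hEvol.ne).symm

/-- For a family of finite nonzero measures `(ν_ε)` with no atom at `0` whose
normalized mass concentrates at infinity, `(ν_ε(ℝ^d))⁻¹ Per_{ν_ε}(E) → |E|` for
every Borel set `E` of finite Lebesgue measure. -/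
theorem statement11 {d : ℕ} (hd : 1 ≤ d)
    (ν : ℝ → Measure (EuclideanSpace ℝ (Fin d)))
    (hν0 : ∀ ε > (0 : ℝ), ν ε {0} = 0)
    (hfin : ∀ ε > (0 : ℝ), ν ε Set.univ < ⊤)
    (hpos : ∀ ε > (0 : ℝ), ν ε Set.univ ≠ 0)
    (htail : ∀ R > (0 : ℝ),
      Tendsto (fun ε => ν ε {x | R < ‖x‖} / ν ε Set.univ) (𝓝[>] (0 : ℝ)) (𝓝 1))
    (E : Set (EuclideanSpace ℝ (Fin d)))
    (hE : MeasurableSet E) (hEvol : volume E < ⊤) :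
    Tendsto (fun ε => (ν ε Set.univ)⁻¹ * nuPer (ν ε) E) (𝓝[>] (0 : ℝ))
      (𝓝 (volume E)) :=
  statement11_general ν hfin hpos htail E hE hEvol
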